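/- arXiv:2105.09056 — 2 statements merged into one kernel-verified Lean document; each statement's English description precedes it below -/
import Mathlib

section
/- Let D and D' be Hermitian Dirac operators with zero diagonal on n vertices which agree on all entries except on the pairs (i_s,j_s) and (j_s,i_s) for s = 1,…,k, where the edges {i_1,j_1},…,{i_k,j_k} are pairwise vertex-disjoint, D'_{i_s j_s} = 0, and |D_{i_s j_s}| = 1/w_s with w_s > 0 (so D' is obtained from D by deleting the k unconnected edges of weights w_s). Assume both graphs G_D and G_{D'} are connected. Set m = max_{1≤s≤k} d^D(i_s,j_s)/w_s and m' = max_{1≤s≤k} d^{D'}(i_s,j_s)/w_s. Then for all vertices x, y: d^D(x,y)/(1+m) ≤ d^{D'}(x,y) ≤ (1+m')·d^D(x,y). -/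
open scoped ENNReal
/-- The operator norm on square matrices induced by the Euclidean (ℓ²) norm. -/
noncomputable def opNorm {ι : Type*} [Finite ι] (M : Matrix ι ι ℂ) : ℝ :=
  letI := Fintype.ofFinite ι
  letI := Classical.decEq ι
  ‖Matrix.toEuclideanCLM (𝕜 := ℂ) M‖

/-- The commutator `[D, π(a)]` of a matrix with the diagonal matrix of `a`. -/
noncomputable def commD {ι : Type*} [Finite ι] (D : Matrix ι ι ℂ) (a : ι → ℂ) : Matrix ι ι ℂ :=
  letI := Fintype.ofFinite ι
  letI := Classical.decEq ι
  D * Matrix.diagonal a - Matrix.diagonal a * D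

/-- Connes' noncommutative distance associated to the Dirac operator `D`. -/
noncomputable def ncDist {ι : Type*} [Finite ι] (D : Matrix ι ι ℂ) (i j : ι) : ℝ≥0∞ :=
  ⨆ (a : ι → ℂ) (_ : opNorm (commD D a) ≤ 1), ENNReal.ofReal ‖a i - a j‖

/-- The weight of an edge: the inverse of `|D i j|` (infinite if `D i j = 0`). -/
noncomputable def eWeight {ι : Type*} (D : Matrix ι ι ℂ) (u v : ι) : ℝ≥0∞ :=
  (ENNReal.ofReal ‖D u v‖)⁻¹

/-- Adjacency in the graph `G_D`. -/
def Adjac {ι : Type*} (D : Matrix ι ι ℂ) (u v : ι) : Prop := u ≠ v ∧ D u v ≠ 0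

/-- The length of a walk `i :: p` computed with weights `eWeight D`. -/
noncomputable def walkLength {ι : Type*} (D : Matrix ι ι ℂ) : ι → List ι → ℝ≥0∞
  | _, [] => 0
  | u, v :: rest => eWeight D u v + walkLength D v rest

/-- `i :: p` is a walk from `i` to `j` in the graph `G_D`. -/
def IsWalk {ι : Type*} (D : Matrix ι ι ℂ) (i j : ι) (p : List ι) : Prop :=
  List.Chain (Adjac D) i p ∧ (i :: p).getLast (List.cons_ne_nil _ _) = j

/-- `i` and `j` lie in the same connected component of `G_D`. -/
def Conn {ι : Type*} (D : Matrix ι ι ℂ) (i j : ι) : Prop := ∃ p, IsWalk D i j p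

/-- The geodesic (weighted shortest-path) distance on `G_D`. -/
noncomputable def gDist {ι : Type*} (D : Matrix ι ι ℂ) (i j : ι) : ℝ≥0∞ :=
  ⨅ (p : List ι) (_ : IsWalk D i j p), walkLength D i p

/-!
If `‖[D', a]‖ ≤ 1`, the commutator `[D - D', a]` has entries `(D - D')ᵤᵥ (a v - a u)` only on the
deleted edges. As these are vertex-disjoint it is a weighted partial permutation matrix, so its
norm is at most its largest entry `|a(i_s) - a(j_s)| / w_s ≤ m'`. Hence `‖[D, a]‖ ≤ 1 + m'`, and
rescaling `a` gives `d^{D'} ≤ (1 + m') d^D`; exchanging `D` and `D'` gives the other bound.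
-/

lemma Finset.sum_eq_zero_or_exists_of_support_subsingleton {ι M : Type*} [Fintype ι]
    [AddCommMonoid M] {f : ι → M} (hf : (Function.support f).Subsingleton) :
    ∑ v, f v = 0 ∨ ∃ v, ∑ u, f u = f v := by
  rcases hf.eq_empty_or_singleton with h | ⟨v, hv⟩
  · exact .inl (Finset.sum_eq_zero fun u _ => Function.notMem_support.mp (h ▸ Set.notMem_empty u))
  · refine .inr ⟨v, Finset.sum_eq_single v (fun u _ huv => ?_) (by simp)⟩
    exact Function.notMem_support.mp (by simpa [hv] using huv)

lemma ENNReal.ofReal_mul_le_ofReal_div {c x w : ℝ} (hc : 0 ≤ c) (hcw : c ≤ w⁻¹) (hx : 0 ≤ x) :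
    ENNReal.ofReal (c * x) ≤ ENNReal.ofReal x / ENNReal.ofReal w := by
  rcases le_or_gt w 0 with hw | hw
  · simp [le_antisymm (hcw.trans (inv_nonpos.mpr hw)) hc]
  · rw [← ENNReal.ofReal_div_of_pos hw, div_eq_inv_mul]
    exact ENNReal.ofReal_le_ofReal (by gcongr)

section OperatorNorm

variable {ι : Type*}

lemma opNorm_eq_norm_toEuclideanCLM [Fintype ι] [DecidableEq ι] (M : Matrix ι ι ℂ) :
    opNorm M = ‖Matrix.toEuclideanCLM (𝕜 := ℂ) M‖ := by
  unfold opNorm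
  congr!

lemma commD_eq_sub [Fintype ι] [DecidableEq ι] (D : Matrix ι ι ℂ) (a : ι → ℂ) :
    commD D a = D * Matrix.diagonal a - Matrix.diagonal a * D := by
  unfold commD
  congr!

variable [Finite ι]

lemma opNorm_add_le (M N : Matrix ι ι ℂ) : opNorm (M + N) ≤ opNorm M + opNorm N := by
  cases nonempty_fintype ι
  classical
  simpa only [opNorm_eq_norm_toEuclideanCLM, map_add] using norm_add_le _ _

lemma opNorm_smul (c : ℂ) (M : Matrix ι ι ℂ) : opNorm (c • M) = ‖c‖ * opNorm M := by
  cases nonempty_fintype ι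
  classical
  simp only [opNorm_eq_norm_toEuclideanCLM, map_smul, norm_smul]

lemma opNorm_le_of_support_subsingleton (M : Matrix ι ι ℂ) {C : ℝ} (hC : 0 ≤ C)
    (hrow : ∀ u, (Function.support (M u)).Subsingleton)
    (hcol : ∀ v, (Function.support fun u => M u v).Subsingleton) (hent : ∀ u v, ‖M u v‖ ≤ C) :
    opNorm M ≤ C := by
  cases nonempty_fintype ι
  classical
  rw [opNorm_eq_norm_toEuclideanCLM]
  refine ContinuousLinearMap.opNorm_le_bound _ hC fun x => ?_
  have hrow_sq : ∀ u, ‖∑ v, M u v * x v‖ ^ 2 ≤ ∑ v, ‖M u v‖ ^ 2 * ‖x v‖ ^ 2 := by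
    intro u
    have hsupp : (Function.support fun v => M u v * x v).Subsingleton :=
      (hrow u).anti (Function.support_mul_subset_left _ _)
    rcases Finset.sum_eq_zero_or_exists_of_support_subsingleton hsupp with h | ⟨v, h⟩
    · rw [h, norm_zero, sq, zero_mul]; positivity
    · rw [h, norm_mul, mul_pow]
      exact Finset.single_le_sum (f := fun v => ‖M u v‖ ^ 2 * ‖x v‖ ^ 2)
        (fun v _ => by positivity) (Finset.mem_univ v)
  have hcol_sq : ∀ v, ∑ u, ‖M u v‖ ^ 2 ≤ C ^ 2 := by
    intro v
    have hsupp : (Function.support fun u => ‖M u v‖ ^ 2).Subsingleton :=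
      (hcol v).anti fun u hu => by simpa using hu
    rcases Finset.sum_eq_zero_or_exists_of_support_subsingleton hsupp with h | ⟨u, h⟩
    · rw [h]; positivity
    · rw [h]; exact pow_le_pow_left₀ (norm_nonneg _) (hent u v) 2
  refine le_of_pow_le_pow_left₀ two_ne_zero (by positivity) ?_
  rw [EuclideanSpace.norm_sq_eq, mul_pow, EuclideanSpace.norm_sq_eq, Finset.mul_sum]
  calc ∑ u, ‖(Matrix.toEuclideanCLM (𝕜 := ℂ) M x) u‖ ^ 2
      ≤ ∑ u, ∑ v, ‖M u v‖ ^ 2 * ‖x v‖ ^ 2 := by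
        refine Finset.sum_le_sum fun u _ => ?_
        simpa [Matrix.toLin'_apply, Matrix.mulVec, dotProduct] using hrow_sq u
    _ = ∑ v, (∑ u, ‖M u v‖ ^ 2) * ‖x v‖ ^ 2 := by
        rw [Finset.sum_comm]; simp only [Finset.sum_mul]
    _ ≤ ∑ v, C ^ 2 * ‖x v‖ ^ 2 :=
        Finset.sum_le_sum fun v _ => mul_le_mul_of_nonneg_right (hcol_sq v) (by positivity)

lemma commD_add (E F : Matrix ι ι ℂ) (a : ι → ℂ) :
    commD (E + F) a = commD E a + commD F a := by
  cases nonempty_fintype ι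
  classical
  simp only [commD_eq_sub, add_mul, mul_add]
  abel

lemma commD_smul (c : ℂ) (D : Matrix ι ι ℂ) (a : ι → ℂ) :
    commD D (c • a) = c • commD D a := by
  cases nonempty_fintype ι
  classical
  simp only [commD_eq_sub, Matrix.diagonal_smul, Matrix.mul_smul, Matrix.smul_mul, smul_sub]

lemma commD_apply (D : Matrix ι ι ℂ) (a : ι → ℂ) (u v : ι) :
    commD D a u v = D u v * (a v - a u) := by
  cases nonempty_fintype ι
  classical
  simp only [commD_eq_sub, Matrix.sub_apply, Matrix.mul_diagonal, Matrix.diagonal_mul]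
  ring

end OperatorNorm

section NcDist

variable {ι : Type*} [Finite ι] {D : Matrix ι ι ℂ}

lemma le_ncDist {a : ι → ℂ} (ha : opNorm (commD D a) ≤ 1) (i j : ι) :
    ENNReal.ofReal ‖a i - a j‖ ≤ ncDist D i j :=
  le_iSup₂ (f := fun a (_ : opNorm (commD D a) ≤ 1) => ENNReal.ofReal ‖a i - a j‖) a ha

lemma ncDist_le {i j : ι} {b : ℝ≥0∞}
    (h : ∀ a : ι → ℂ, opNorm (commD D a) ≤ 1 → ENNReal.ofReal ‖a i - a j‖ ≤ b) :
    ncDist D i j ≤ b :=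
  iSup₂_le h

@[simp]
lemma ncDist_self (i : ι) : ncDist D i i = 0 := by
  simp [ncDist]

lemma ofReal_norm_sub_le_mul_ncDist {a : ι → ℂ} {C : ℝ} (hC : 0 < C)
    (ha : opNorm (commD D a) ≤ C) (i j : ι) :
    ENNReal.ofReal ‖a i - a j‖ ≤ ENNReal.ofReal C * ncDist D i j := by
  have hnorm : ‖((C⁻¹ : ℝ) : ℂ)‖ = C⁻¹ := by simp [hC.le]
  have hadm : opNorm (commD D (((C⁻¹ : ℝ) : ℂ) • a)) ≤ 1 := by
    rw [commD_smul, opNorm_smul, hnorm]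
    exact (inv_mul_le_one₀ hC).mpr ha
  calc ENNReal.ofReal ‖a i - a j‖
      = ENNReal.ofReal C * ENNReal.ofReal ‖(((C⁻¹ : ℝ) : ℂ) • a) i - (((C⁻¹ : ℝ) : ℂ) • a) j‖ := by
        rw [← ENNReal.ofReal_mul hC.le, Pi.smul_apply, Pi.smul_apply, ← smul_sub, norm_smul,
          hnorm, mul_inv_cancel_left₀ hC.ne']
    _ ≤ ENNReal.ofReal C * ncDist D i j := by gcongr; exact le_ncDist hadm i j

lemma ncDist_pos {i j : ι} (hij : i ≠ j) : 0 < ncDist D i j := by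
  classical
  set a : ι → ℂ := Pi.single i 1
  have hC : 0 < max (opNorm (commD D a)) 1 := lt_max_of_lt_right one_pos
  have h := ofReal_norm_sub_le_mul_ncDist hC (le_max_left _ _) i j
  simp only [a, Pi.single_eq_same, Pi.single_eq_of_ne' hij, sub_zero, norm_one,
    ENNReal.ofReal_one] at h
  exact pos_of_ne_zero fun h0 => by simp [h0] at h

lemma ncDist_le_mul_ncDist_of_commD_sub_le (E F : Matrix ι ι ℂ) {M : ℝ≥0∞}
    (h : ∀ a, opNorm (commD F a) ≤ 1 → ENNReal.ofReal (opNorm (commD (E - F) a)) ≤ M)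
    (x y : ι) : ncDist F x y ≤ (1 + M) * ncDist E x y := by
  rcases eq_or_ne x y with rfl | hxy
  · simp
  rcases eq_or_ne M ⊤ with rfl | hM
  · simp [ENNReal.top_mul (ncDist_pos hxy).ne']
  refine ncDist_le fun a ha => ?_
  have hE : opNorm (commD E a) ≤ 1 + M.toReal := by
    calc opNorm (commD E a) = opNorm (commD F a + commD (E - F) a) := by
          rw [← commD_add, add_sub_cancel]
      _ ≤ 1 + M.toReal :=
          (opNorm_add_le _ _).trans <|
            add_le_add ha ((ENNReal.ofReal_le_iff_le_toReal hM).mp (h a ha))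
  calc ENNReal.ofReal ‖a x - a y‖ ≤ ENNReal.ofReal (1 + M.toReal) * ncDist E x y :=
        ofReal_norm_sub_le_mul_ncDist (by positivity) hE x y
    _ = (1 + M) * ncDist E x y := by
        rw [ENNReal.ofReal_add zero_le_one ENNReal.toReal_nonneg, ENNReal.ofReal_one,
          ENNReal.ofReal_toReal hM]

end NcDist

section Matching

variable {κ ι : Type*} {e : κ → ι × ι} {w : κ → ℝ}

def SupportedOnEdges (e : κ → ι × ι) (w : κ → ℝ) (Δ : Matrix ι ι ℂ) : Prop :=
  ∀ u v, Δ u v ≠ 0 → ∃ s, ((u, v) = e s ∨ (u, v) = ((e s).2, (e s).1)) ∧ ‖Δ u v‖ ≤ (w s)⁻¹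

lemma SupportedOnEdges.neg {Δ : Matrix ι ι ℂ} (h : SupportedOnEdges e w Δ) :
    SupportedOnEdges e w (-Δ) := by
  simpa only [SupportedOnEdges, Matrix.neg_apply, neg_ne_zero, norm_neg] using h

lemma mem_edge_swap {u v : ι} {s : κ} (h : (u, v) = e s ∨ (u, v) = ((e s).2, (e s).1)) :
    (v, u) = e s ∨ (v, u) = ((e s).2, (e s).1) := by
  simp only [Prod.ext_iff] at h ⊢
  tauto

lemma norm_sub_eq_of_mem_edge (a : ι → ℂ) {u v : ι} {s : κ}
    (h : (u, v) = e s ∨ (u, v) = ((e s).2, (e s).1)) :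
    ‖a v - a u‖ = ‖a (e s).1 - a (e s).2‖ := by
  rcases h with h | h <;> simp only [Prod.ext_iff] at h <;> rw [h.1, h.2]
  exact norm_sub_rev _ _

variable (hends : ∀ s, (e s).1 ≠ (e s).2)
    (hdisj : ∀ s t, s ≠ t →
      (e s).1 ≠ (e t).1 ∧ (e s).1 ≠ (e t).2 ∧ (e s).2 ≠ (e t).1 ∧ (e s).2 ≠ (e t).2)
include hends hdisj

lemma eq_of_mem_edge_of_mem_edge {u v v' : ι} {s t : κ}
    (h : (u, v) = e s ∨ (u, v) = ((e s).2, (e s).1))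
    (h' : (u, v') = e t ∨ (u, v') = ((e t).2, (e t).1)) : v = v' := by
  simp only [Prod.ext_iff] at h h'
  grind

lemma ofReal_opNorm_commD_le_of_supportedOnEdges [Finite ι] {Δ : Matrix ι ι ℂ}
    (hΔ : SupportedOnEdges e w Δ) (a : ι → ℂ) :
    ENNReal.ofReal (opNorm (commD Δ a)) ≤
      ⨆ s, ENNReal.ofReal ‖a (e s).1 - a (e s).2‖ / ENNReal.ofReal (w s) := by
  set B := ⨆ s, ENNReal.ofReal ‖a (e s).1 - a (e s).2‖ / ENNReal.ofReal (w s)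
  rcases eq_or_ne B ⊤ with hB | hB
  · exact hB ▸ le_top
  have hsupp : ∀ u v, commD Δ a u v ≠ 0 → Δ u v ≠ 0 := fun u v h h0 =>
    h (by simp [commD_apply, h0])
  refine (ENNReal.ofReal_le_iff_le_toReal hB).mpr <|
    opNorm_le_of_support_subsingleton _ ENNReal.toReal_nonneg ?_ ?_ ?_
  · intro u v hv v' hv'
    obtain ⟨s, hs, -⟩ := hΔ u v (hsupp u v hv)
    obtain ⟨t, ht, -⟩ := hΔ u v' (hsupp u v' hv')
    exact eq_of_mem_edge_of_mem_edge hends hdisj hs ht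
  · intro v u hu u' hu'
    obtain ⟨s, hs, -⟩ := hΔ u v (hsupp u v hu)
    obtain ⟨t, ht, -⟩ := hΔ u' v (hsupp u' v hu')
    exact eq_of_mem_edge_of_mem_edge hends hdisj (mem_edge_swap hs) (mem_edge_swap ht)
  · intro u v
    rcases eq_or_ne (Δ u v) 0 with h0 | h0
    · simp [commD_apply, h0]
    obtain ⟨s, hs, hle⟩ := hΔ u v h0
    rw [← ENNReal.ofReal_le_iff_le_toReal hB, commD_apply, norm_mul, norm_sub_eq_of_mem_edge a hs]
    exact (ENNReal.ofReal_mul_le_ofReal_div (norm_nonneg _) hle (norm_nonneg _)).trans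
      (le_iSup (fun s => ENNReal.ofReal ‖a (e s).1 - a (e s).2‖ / ENNReal.ofReal (w s)) s)

lemma ncDist_le_mul_ncDist_of_supportedOnEdges [Finite ι] {E F : Matrix ι ι ℂ}
    (hΔ : SupportedOnEdges e w (E - F)) (x y : ι) :
    ncDist F x y ≤ (1 + ⨆ s, ncDist F (e s).1 (e s).2 / ENNReal.ofReal (w s)) * ncDist E x y := by
  refine ncDist_le_mul_ncDist_of_commD_sub_le E F (fun a ha => ?_) x y
  exact (ofReal_opNorm_commD_le_of_supportedOnEdges hends hdisj hΔ a).trans <|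
    iSup_mono fun s => ENNReal.div_le_div_right (le_ncDist ha _ _) _

end Matching

theorem stmt13_general {n k : ℕ} (D D' : Matrix (Fin n) (Fin n) ℂ)
    (hherm : D.IsHermitian)
    (e : Fin k → Fin n × Fin n) (w : Fin k → ℝ)
    (hends : ∀ s, (e s).1 ≠ (e s).2)
    (hdisj : ∀ s t, s ≠ t →
      (e s).1 ≠ (e t).1 ∧ (e s).1 ≠ (e t).2 ∧ (e s).2 ≠ (e t).1 ∧ (e s).2 ≠ (e t).2)
    (hagree : ∀ a b : Fin n,
      (∀ s, ¬ ((a, b) = e s ∨ (a, b) = ((e s).2, (e s).1))) → D' a b = D a b)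
    (hzero : ∀ s, D' (e s).1 (e s).2 = 0 ∧ D' (e s).2 (e s).1 = 0)
    (habs : ∀ s, ‖D (e s).1 (e s).2‖ = (w s)⁻¹)
    (x y : Fin n) :
    ncDist D x y / (1 + ⨆ s, ncDist D (e s).1 (e s).2 / ENNReal.ofReal (w s)) ≤
      ncDist D' x y ∧
    ncDist D' x y ≤
      (1 + ⨆ s, ncDist D' (e s).1 (e s).2 / ENNReal.ofReal (w s)) * ncDist D x y := by
  have hΔ : SupportedOnEdges e w (D - D') := by
    intro u v huv
    obtain ⟨s, hs⟩ : ∃ s, (u, v) = e s ∨ (u, v) = ((e s).2, (e s).1) := by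
      by_contra! h
      exact huv (by rw [Matrix.sub_apply, hagree u v fun s => not_or.mpr (h s), sub_self])
    refine ⟨s, hs, le_of_eq ?_⟩
    rcases hs with h | h <;> simp only [Prod.ext_iff] at h <;> rw [h.1, h.2, Matrix.sub_apply]
    · rw [(hzero s).1, sub_zero, habs s]
    · rw [(hzero s).2, sub_zero, ← hherm.apply, norm_star, habs s]
  have hΔ' : SupportedOnEdges e w (D' - D) := neg_sub D D' ▸ hΔ.neg
  exact ⟨ENNReal.div_le_of_le_mul' (ncDist_le_mul_ncDist_of_supportedOnEdges hends hdisj hΔ' x y),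
    ncDist_le_mul_ncDist_of_supportedOnEdges hends hdisj hΔ x y⟩

theorem stmt13 {n k : ℕ} (D D' : Matrix (Fin n) (Fin n) ℂ)
    (hherm : D.IsHermitian) (hdiag : ∀ i, D i i = 0)
    (hherm' : D'.IsHermitian) (hdiag' : ∀ i, D' i i = 0)
    (e : Fin k → Fin n × Fin n) (w : Fin k → ℝ) (hw : ∀ s, 0 < w s)
    (hends : ∀ s, (e s).1 ≠ (e s).2)
    (hdisj : ∀ s t, s ≠ t →
      (e s).1 ≠ (e t).1 ∧ (e s).1 ≠ (e t).2 ∧ (e s).2 ≠ (e t).1 ∧ (e s).2 ≠ (e t).2)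
    (hagree : ∀ a b : Fin n,
      (∀ s, ¬ ((a, b) = e s ∨ (a, b) = ((e s).2, (e s).1))) → D' a b = D a b)
    (hzero : ∀ s, D' (e s).1 (e s).2 = 0 ∧ D' (e s).2 (e s).1 = 0)
    (habs : ∀ s, ‖D (e s).1 (e s).2‖ = (w s)⁻¹)
    (hconn : ∀ x y, Conn D x y) (hconn' : ∀ x y, Conn D' x y)
    (x y : Fin n) :
    ncDist D x y / (1 + ⨆ s, ncDist D (e s).1 (e s).2 / ENNReal.ofReal (w s)) ≤
      ncDist D' x y ∧
    ncDist D' x y ≤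
      (1 + ⨆ s, ncDist D' (e s).1 (e s).2 / ENNReal.ofReal (w s)) * ncDist D x y :=
  stmt13_general D D' hherm e w hends hdisj hagree hzero habs x y
end

section
/- Let G = (V,E) be a finite connected undirected graph with a weight function w : E → (0,∞), and let ℓ^w denote the induced weighted shortest-path distance on V. Then for any two vertices i, j: sup{ |a(i) − a(j)| : a : V → ℂ such that |a(u) − a(v)| ≤ w({u,v}) for every edge {u,v} ∈ E } = ℓ^w(i,j). (This expresses that the noncommutative distance of the split-graph spectral triple equals the geodesic distance.) -/
/-!
Every function that is `w`-Lipschitz along edges is, by the triangle inequality along a walk,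
`w`-Lipschitz for the weighted length of any walk, so the supremum is at most the geodesic
distance. Conversely the distance `v ↦ ℓ^w(i, v)` from `i` is itself `w`-Lipschitz along
edges, and it attains the value `ℓ^w(i, j)` at the pair `(i, j)`.
-/

open scoped ENNReal

namespace SimpleGraph

variable {V : Type*} {G : SimpleGraph V} (w : Sym2 V → ℝ)

def Walk.weightedLength {u v : V} (p : G.Walk u v) : ℝ :=
  (p.edges.map w).sum

@[simp]
lemma Walk.weightedLength_nil (u : V) : (nil : G.Walk u u).weightedLength w = 0 := by
  simp [weightedLength]

@[simp]
lemma Walk.weightedLength_cons {u v x : V} (h : G.Adj u v) (p : G.Walk v x) :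
    (cons h p).weightedLength w = w s(u, v) + p.weightedLength w := by
  simp [weightedLength]

lemma Walk.weightedLength_concat {u v x : V} (p : G.Walk u v) (h : G.Adj v x) :
    (p.concat h).weightedLength w = p.weightedLength w + w s(v, x) := by
  simp [weightedLength, edges_concat]

lemma Walk.norm_sub_le_weightedLength {E : Type*} [SeminormedAddGroup E] {a : V → E}
    (ha : ∀ u v, G.Adj u v → ‖a u - a v‖ ≤ w s(u, v)) {u v : V} (p : G.Walk u v) :
    ‖a u - a v‖ ≤ p.weightedLength w := by
  induction p with
  | nil => simp
  | cons h q ih =>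
    calc _ ≤ _ := norm_sub_le_norm_sub_add_norm_sub _ _ _
      _ ≤ _ := add_le_add (ha _ _ h) ih
      _ = _ := (weightedLength_cons w h q).symm

variable (G) in
noncomputable def weightedDist (u v : V) : ℝ≥0∞ :=
  ⨅ p : G.Walk u v, ENNReal.ofReal (p.weightedLength w)

lemma weightedDist_self (u : V) : G.weightedDist w u u = 0 :=
  nonpos_iff_eq_zero.mp <| (iInf_le _ Walk.nil).trans (by simp)

lemma Reachable.weightedDist_ne_top {u v : V} (h : G.Reachable u v) :
    G.weightedDist w u v ≠ ⊤ :=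
  let ⟨p⟩ := h
  ne_top_of_le_ne_top ENNReal.ofReal_ne_top (iInf_le _ p)

lemma weightedDist_le_add_of_adj {u v x : V} (h : G.Adj v x) :
    G.weightedDist w u x ≤ G.weightedDist w u v + ENNReal.ofReal (w s(v, x)) := by
  unfold weightedDist
  rw [ENNReal.iInf_add]
  refine le_iInf fun p => (iInf_le _ (p.concat h)).trans ?_
  rw [Walk.weightedLength_concat]
  exact ENNReal.ofReal_add_le

lemma toReal_weightedDist_le_add_of_adj {u v x : V} (hr : G.Reachable u v)
    (hw : ∀ e ∈ G.edgeSet, 0 < w e) (h : G.Adj v x) :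
    (G.weightedDist w u x).toReal ≤ (G.weightedDist w u v).toReal + w s(v, x) := by
  have hvx : 0 ≤ w s(v, x) := (hw _ h).le
  calc _ ≤ (G.weightedDist w u v + ENNReal.ofReal (w s(v, x))).toReal :=
        ENNReal.toReal_mono (by finiteness [hr.weightedDist_ne_top w])
          (weightedDist_le_add_of_adj w h)
    _ = _ := by
      rw [ENNReal.toReal_add (hr.weightedDist_ne_top w) ENNReal.ofReal_ne_top,
        ENNReal.toReal_ofReal hvx]

lemma abs_toReal_weightedDist_sub_le {u v x : V} (hr : G.Reachable u v)
    (hw : ∀ e ∈ G.edgeSet, 0 < w e) (h : G.Adj v x) :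
    |(G.weightedDist w u v).toReal - (G.weightedDist w u x).toReal| ≤ w s(v, x) := by
  have hvx := toReal_weightedDist_le_add_of_adj w hr hw h
  have hxv := toReal_weightedDist_le_add_of_adj w (hr.trans h.reachable) hw h.symm
  rw [Sym2.eq_swap] at hxv
  exact abs_sub_le_iff.mpr ⟨by linarith, by linarith⟩

end SimpleGraph

open SimpleGraph in
theorem stmt15_general {V : Type*} (G : SimpleGraph V) (hG : G.Connected)
    (w : Sym2 V → ℝ) (hw : ∀ e ∈ G.edgeSet, 0 < w e) (i j : V) :
    (⨆ (a : V → ℂ) (_ : ∀ u v : V, G.Adj u v → ‖a u - a v‖ ≤ w s(u, v)),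
        ENNReal.ofReal ‖a i - a j‖) =
      ⨅ (p : G.Walk i j), ENNReal.ofReal ((p.edges.map w).sum) := by
  refine le_antisymm (iSup₂_le fun a ha => le_iInf fun p =>
    ENNReal.ofReal_le_ofReal (p.norm_sub_le_weightedLength w ha)) ?_
  let a : V → ℂ := fun v => (G.weightedDist w i v).toReal
  have ha : ∀ u v, G.Adj u v → ‖a u - a v‖ ≤ w s(u, v) := fun u v h => by
    simpa [a, ← Complex.ofReal_sub, Complex.norm_real] using
      abs_toReal_weightedDist_sub_le w (hG i u) hw h
  calc ⨅ p : G.Walk i j, ENNReal.ofReal ((p.edges.map w).sum) = G.weightedDist w i j := rfl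
    _ = ENNReal.ofReal ‖a i - a j‖ := by
        simp [a, weightedDist_self, ENNReal.ofReal_toReal ((hG i j).weightedDist_ne_top w)]
    _ ≤ _ := le_iSup₂ (f := fun b (_ : ∀ u v, G.Adj u v → ‖b u - b v‖ ≤ w s(u, v)) =>
        ENNReal.ofReal ‖b i - b j‖) a ha

theorem stmt15 {V : Type*} [Fintype V] (G : SimpleGraph V) (hG : G.Connected)
    (w : Sym2 V → ℝ) (hw : ∀ e ∈ G.edgeSet, 0 < w e) (i j : V) :
    (⨆ (a : V → ℂ) (_ : ∀ u v : V, G.Adj u v → ‖a u - a v‖ ≤ w s(u, v)),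
        ENNReal.ofReal ‖a i - a j‖) =
      ⨅ (p : G.Walk i j), ENNReal.ofReal ((p.edges.map w).sum) :=
  stmt15_general G hG w hw i j
end
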